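/- arXiv:1306.1426 — 4 statements merged into one kernel-verified Lean document; each statement's English description precedes it below -/
import Mathlib

section
/- The domain Ω^z_0, defined by the permutation constraints together with big-M constraints C^i x ≤ θ_j + M(1 − z_{ij}) for all i,j ∈ P and ordering constraints θ_j ≥ θ_{j+1}, equals the domain Ω^z in which the big-M constraints are replaced by C^i x ≤ θ_j + M(1 − Σ_{k≥j} z_{ik}) for all i,j ∈ P. -/
open Finset

lemma theta_antitone {p : ℕ} (θ : Fin p → ℝ)
    (h : ∀ j : Fin p, ∀ h : (j : ℕ) + 1 < p, θ ⟨(j : ℕ) + 1, h⟩ ≤ θ j) :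
    ∀ j k : Fin p, j ≤ k → θ k ≤ θ j := by
  have key : ∀ m : ℕ, ∀ j k : Fin p, (k : ℕ) = (j : ℕ) + m → θ k ≤ θ j := by
    intro m
    induction m with
    | zero =>
      intro j k hk
      have : k = j := Fin.ext (by omega)
      simp [this]
    | succ m ih =>
      intro j k hk
      have hk' : (j : ℕ) + m < p := by omega
      set k' : Fin p := ⟨(j : ℕ) + m, hk'⟩
      have h1 : θ k ≤ θ k' := by
        have hlt : (k' : ℕ) + 1 < p := by simp [k']; omega
        have := h k' hlt
        have hek : k = ⟨(k' : ℕ) + 1, hlt⟩ := Fin.ext (by simp [k']; omega)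
        rw [hek]; exact this
      exact h1.trans (ih j k' rfl)
  intro j k hjk
  exact key ((k : ℕ) - (j : ℕ)) j k (by omega)

/-- Ω^z_0 (big-M constraints with 1 − z_{ij}) equals Ω^z (big-M constraints with
1 − Σ_{k≥j} z_{ik}). -/
theorem stmt_3 (p n : ℕ) (Q : Set (Fin n → ℝ)) (hQ : Q.Nonempty)
    (C : Fin p → Fin n → ℝ) (hC : ∀ i t, 0 ≤ C i t) (M : ℝ) (hM : 0 < M)
    (hMub : ∀ x ∈ Q, ∀ i, ∑ t, C i t * x t ≤ M) :
    ∀ (x : Fin n → ℝ) (z : Fin p → Fin p → ℝ) (θ : Fin p → ℝ),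
      (x ∈ Q ∧ (∀ i j, z i j = 0 ∨ z i j = 1) ∧ (∀ j, ∑ i, z i j = 1) ∧
        (∀ i, ∑ j, z i j = 1) ∧
        (∀ i j, ∑ t, C i t * x t ≤ θ j + M * (1 - z i j)) ∧
        (∀ j : Fin p, ∀ h : (j : ℕ) + 1 < p, θ ⟨(j : ℕ) + 1, h⟩ ≤ θ j)) ↔
      (x ∈ Q ∧ (∀ i j, z i j = 0 ∨ z i j = 1) ∧ (∀ j, ∑ i, z i j = 1) ∧
        (∀ i, ∑ j, z i j = 1) ∧
        (∀ i j, ∑ t, C i t * x t ≤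
          θ j + M * (1 - ∑ k ∈ Finset.univ.filter (fun k : Fin p => j ≤ k), z i k)) ∧
        (∀ j : Fin p, ∀ h : (j : ℕ) + 1 < p, θ ⟨(j : ℕ) + 1, h⟩ ≤ θ j)) := by
  intro x z θ
  constructor
  · rintro ⟨hxQ, hbin, hcol, hrow, hbig, hord⟩
    refine ⟨hxQ, hbin, hcol, hrow, ?_, hord⟩
    intro i j
    have hnn : ∀ k, 0 ≤ z i k := by
      intro k; rcases hbin i k with h | h <;> simp [h]
    by_cases hex : ∃ k, j ≤ k ∧ z i k = 1
    · obtain ⟨k, hjk, hzk⟩ := hex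
      have hS1 : 1 ≤ ∑ k ∈ Finset.univ.filter (fun k : Fin p => j ≤ k), z i k := by
        have := Finset.single_le_sum (f := z i)
          (fun k _ => hnn k) (show k ∈ Finset.univ.filter (fun k : Fin p => j ≤ k) by
            simp [hjk])
        linarith
      have hS2 : ∑ k ∈ Finset.univ.filter (fun k : Fin p => j ≤ k), z i k ≤ 1 := by
        have := Finset.sum_le_sum_of_subset_of_nonneg
          (Finset.filter_subset (fun k : Fin p => j ≤ k) Finset.univ)
          (fun k _ _ => hnn k)
        rw [hrow i] at this
        exact this
      have hCk : ∑ t, C i t * x t ≤ θ k := by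
        have := hbig i k
        rw [hzk] at this
        simpa using this
      have := theta_antitone θ hord j k hjk
      nlinarith
    · push_neg at hex
      have hS0 : ∑ k ∈ Finset.univ.filter (fun k : Fin p => j ≤ k), z i k = 0 := by
        apply Finset.sum_eq_zero
        intro k hk
        simp only [Finset.mem_filter, Finset.mem_univ, true_and] at hk
        rcases hbin i k with h | h
        · exact h
        · exact absurd h (hex k hk)
      have hzj : z i j = 0 := by
        rcases hbin i j with h | h
        · exact h
        · exact absurd h (hex j le_rfl)
      have := hbig i j
      rw [hzj] at this
      rw [hS0]
      simpa using this
  · rintro ⟨hxQ, hbin, hcol, hrow, hbig, hord⟩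
    refine ⟨hxQ, hbin, hcol, hrow, ?_, hord⟩
    intro i j
    have hnn : ∀ k, 0 ≤ z i k := by
      intro k; rcases hbin i k with h | h <;> simp [h]
    have hzle : z i j ≤ ∑ k ∈ Finset.univ.filter (fun k : Fin p => j ≤ k), z i k :=
      Finset.single_le_sum (f := z i) (fun k _ => hnn k)
        (show j ∈ Finset.univ.filter (fun k : Fin p => j ≤ k) by simp)
    have := hbig i j
    nlinarith
end

section
/- Every feasible solution (x, z, θ) of the relaxation Ω^z_{R1} (obtained from Ω^z by dropping the ordering constraints θ_j ≥ θ_{j+1}) satisfies θ_i ≥ max{C^{σ_i}x, C^{σ_{i+1}}x} for i = 1,...,p−1 and θ_p ≥ C^{σ_p}x, where σ is the permutation determined by z (i.e., z_{σ_j, j} = 1 for all j). -/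
open Finset

/-- Every feasible solution of the relaxation Ω^z_{R1} satisfies
θ_i ≥ max{C^{σ_i}x, C^{σ_{i+1}}x} for i < p and θ_p ≥ C^{σ_p}x, where σ is the
permutation determined by z. -/
theorem stmt_6 (p n : ℕ) (hp : 0 < p) (Q : Set (Fin n → ℝ))
    (C : Fin p → Fin n → ℝ) (M : ℝ) (hM : 0 < M)
    (hMub : ∀ x ∈ Q, ∀ i, ∑ t, C i t * x t ≤ M)
    (x : Fin n → ℝ) (z : Fin p → Fin p → ℝ) (θ : Fin p → ℝ)
    (hx : x ∈ Q) (hbin : ∀ i j, z i j = 0 ∨ z i j = 1)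
    (hcol : ∀ j, ∑ i, z i j = 1) (hrow : ∀ i, ∑ j, z i j = 1)
    (hineq : ∀ i j, ∑ t, C i t * x t ≤
      θ j + M * (1 - ∑ k ∈ Finset.univ.filter (fun k : Fin p => j ≤ k), z i k))
    (σ : Equiv.Perm (Fin p)) (hσ : ∀ j, z (σ j) j = 1) :
    (∀ j : Fin p, ∀ h : (j : ℕ) + 1 < p,
      max (∑ t, C (σ j) t * x t) (∑ t, C (σ ⟨(j : ℕ) + 1, h⟩) t * x t) ≤ θ j) ∧
    ∑ t, C (σ ⟨p - 1, by omega⟩) t * x t ≤ θ ⟨p - 1, by omega⟩ := by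
  -- each row of z is an indicator
  have hz : ∀ (m k : Fin p), z (σ m) k = if k = m then 1 else 0 := by
    intro m k
    by_cases h : k = m
    · subst h; simp [hσ]
    · simp only [h, if_false]
      rcases hbin (σ m) k with h0 | h1
      · exact h0
      · exfalso
        have hpair : ({k, m} : Finset (Fin p)) ⊆ Finset.univ := Finset.subset_univ _
        have hsum : ∑ j ∈ ({k, m} : Finset (Fin p)), z (σ m) j
            ≤ ∑ j, z (σ m) j := by
          refine Finset.sum_le_sum_of_subset_of_nonneg hpair ?_
          intro i _ _
          rcases hbin (σ m) i with h0 | h1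
          · simp [h0]
          · simp [h1]
        rw [Finset.sum_pair h, h1, hσ m, hrow (σ m)] at hsum
        linarith
  -- the filtered sum
  have hfs : ∀ (j m : Fin p), j ≤ m →
      ∑ k ∈ Finset.univ.filter (fun k : Fin p => j ≤ k), z (σ m) k = 1 := by
    intro j m hjm
    have : ∑ k ∈ Finset.univ.filter (fun k : Fin p => j ≤ k), z (σ m) k
        = ∑ k ∈ Finset.univ.filter (fun k : Fin p => j ≤ k),
            (if k = m then (1:ℝ) else 0) := by
      refine Finset.sum_congr rfl fun k _ => hz m k
    rw [this, Finset.sum_ite_eq' _ m (fun _ => (1:ℝ))]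
    simp [hjm]
  have key : ∀ (j m : Fin p), j ≤ m → ∑ t, C (σ m) t * x t ≤ θ j := by
    intro j m hjm
    have := hineq (σ m) j
    rw [hfs j m hjm] at this
    simpa using this
  refine ⟨fun j h => ?_, key _ _ le_rfl⟩
  refine max_le (key j j le_rfl) (key j ⟨(j:ℕ)+1, h⟩ ?_)
  exact le_of_lt (by exact Fin.lt_def.mpr (by simp))
end

section
/- Suppose (x, y, z) is a feasible solution to F^{zy}_0 that additionally satisfies Σ_{k∈P} y_{kj} = C^{i(j)} x for all j ∈ P, where i(j) is the unique index with z_{i(j),j} = 1. If y_{i'j'} > M·z_{i'j'} for some i', j' ∈ P, then z_{i'j'} = 0, and modifying y by setting y_{i'j'} := 0 and y_{i(j'),j'} := y_{i(j'),j'} + y_{i'j'} yields another feasible solution with the same column sums Σ_i y_{ij} for every j. Consequently, there exists an optimal solution of F^{zy}_0 satisfying y_{ij} ≤ M·z_{ij} for all i,j ∈ P. -/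
open Finset

/-- Feasibility for the formulation F^{zy}_0. -/
def FeasZY (p n : ℕ) (Q : Set (Fin n → ℝ)) (C : Fin p → Fin n → ℝ) (M : ℝ)
    (x : Fin n → ℝ) (y z : Fin p → Fin p → ℝ) : Prop :=
  x ∈ Q ∧ (∀ i j, z i j = 0 ∨ z i j = 1) ∧ (∀ j, ∑ i, z i j = 1) ∧
    (∀ i, ∑ j, z i j = 1) ∧ (∀ i j, 0 ≤ y i j) ∧
    (∀ i j, ∑ t, C i t * x t ≤ (∑ i', y i' j) + M * (1 - z i j)) ∧
    (∀ j : Fin p, ∀ h : (j : ℕ) + 1 < p, ∑ i, y i ⟨(j : ℕ) + 1, h⟩ ≤ ∑ i, y i j)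

/-- If a feasible solution of F^{zy}_0 satisfies Σ_k y_{kj} = C^{i(j)}x where i(j) is the
unique index with z_{i(j),j} = 1, and y_{i'j'} > M z_{i'j'} for some i',j', then
z_{i'j'} = 0 and shifting the mass y_{i'j'} to row i(j') keeps feasibility and all column
sums of y.  Consequently there is an optimal solution with y_{ij} ≤ M z_{ij} for all i,j. -/
theorem stmt_11 (p n : ℕ) (Q : Set (Fin n → ℝ)) (hQne : Q.Nonempty) (hQfin : Q.Finite)
    (C : Fin p → Fin n → ℝ) (hC : ∀ i t, 0 ≤ C i t)
    (ω : Fin p → ℝ) (hω : ∀ j, 0 ≤ ω j) (M : ℝ) (hM : 0 < M)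
    (hMub : ∀ x ∈ Q, ∀ i, ∑ t, C i t * x t < M) :
    (∀ (x : Fin n → ℝ) (y z : Fin p → Fin p → ℝ) (I : Fin p → Fin p),
      FeasZY p n Q C M x y z →
      (∀ j, z (I j) j = 1) →
      (∀ j, ∑ k, y k j = ∑ t, C (I j) t * x t) →
      ∀ i' j', M * z i' j' < y i' j' →
        z i' j' = 0 ∧
        FeasZY p n Q C M x
          (fun i j => if i = i' ∧ j = j' then 0
            else if i = I j' ∧ j = j' then y (I j') j' + y i' j' else y i j) z ∧
        (∀ j, (∑ i, (fun i j => if i = i' ∧ j = j' then 0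
            else if i = I j' ∧ j = j' then y (I j') j' + y i' j' else y i j) i j)
          = ∑ i, y i j)) ∧
    ((∃ x y z, FeasZY p n Q C M x y z ∧
        ∀ x' y' z', FeasZY p n Q C M x' y' z' →
          ∑ j, ω j * ∑ i, y i j ≤ ∑ j, ω j * ∑ i, y' i j) →
      ∃ x y z, FeasZY p n Q C M x y z ∧
        (∀ x' y' z', FeasZY p n Q C M x' y' z' →
          ∑ j, ω j * ∑ i, y i j ≤ ∑ j, ω j * ∑ i, y' i j) ∧
        ∀ i j, y i j ≤ M * z i j) := by
  constructor
  · intro x y z I hfeas hzI hcol i' j' hlt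
    obtain ⟨hxQ, hz01, hzc, hzr, hy0, hcon, hmono⟩ := hfeas
    have hCM : ∑ t, C (I j') t * x t < M := hMub x hxQ _
    have hz0 : z i' j' = 0 := by
      rcases hz01 i' j' with h | h
      · exact h
      · exfalso
        have h1 : y i' j' ≤ ∑ k, y k j' :=
          Finset.single_le_sum (fun k _ => hy0 k j') (Finset.mem_univ i')
        rw [hcol j'] at h1
        rw [h, mul_one] at hlt
        linarith
    have hne : i' ≠ I j' := by
      intro h
      rw [h, hzI j'] at hz0
      norm_num at hz0
    have hsum : ∀ j, (∑ i, (fun i j => if i = i' ∧ j = j' then 0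
        else if i = I j' ∧ j = j' then y (I j') j' + y i' j' else y i j) i j)
        = ∑ i, y i j := by
      intro j
      by_cases hj : j = j'
      · subst hj
        have he : ∀ i : Fin p,
            (fun i j => if i = i' ∧ j = j then 0
              else if i = I j ∧ j = j then y (I j) j + y i' j else y i j) i j
            = y i j + ((if i = I j then y i' j else 0) - (if i = i' then y i' j else 0)) := by
          intro i
          by_cases h1 : i = i'
          · subst h1
            simp [hne]
          · by_cases h2 : i = I j
            · subst h2
              simp [h1, Ne.symm hne]
            · simp [h1, h2]
        rw [Finset.sum_congr rfl (fun i _ => he i), Finset.sum_add_distrib,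
          Finset.sum_sub_distrib]
        simp
      · simp only [hj, and_false, if_false]
    refine ⟨hz0, ⟨hxQ, hz01, hzc, hzr, ?_, ?_, ?_⟩, hsum⟩
    · intro i j
      dsimp only
      split_ifs
      · exact le_refl 0
      · exact add_nonneg (hy0 _ _) (hy0 _ _)
      · exact hy0 _ _
    · intro i j
      rw [hsum j]
      exact hcon i j
    · intro j h
      rw [hsum, hsum]
      exact hmono j h
  · rintro ⟨x, y, z, hfeas, hopt⟩
    obtain ⟨hxQ, hz01, hzc, hzr, hy0, hcon, hmono⟩ := hfeas
    have hzn : ∀ i j, 0 ≤ z i j := by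
      intro i j; rcases hz01 i j with h | h <;> rw [h] <;> norm_num
    have hcs : ∀ j, 0 ≤ ∑ k, y k j := fun j => Finset.sum_nonneg fun k _ => hy0 k j
    have hs : ∀ j, (∑ i, (fun i j => z i j * min (∑ k, y k j) M) i j)
        = min (∑ k, y k j) M := by
      intro j
      dsimp only
      rw [← Finset.sum_mul, hzc j, one_mul]
    refine ⟨x, fun i j => z i j * min (∑ k, y k j) M, z,
      ⟨hxQ, hz01, hzc, hzr, ?_, ?_, ?_⟩, ?_, ?_⟩
    · intro i j
      exact mul_nonneg (hzn i j) (le_min (hcs j) hM.le)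
    · intro i j
      rw [hs j]
      rcases hz01 i j with h | h
      · have := hMub x hxQ i
        have hm : 0 ≤ min (∑ k, y k j) M := le_min (hcs j) hM.le
        rw [h]
        ring_nf
        nlinarith
      · have hc := hcon i j
        rw [h] at hc ⊢
        ring_nf at hc ⊢
        have := hMub x hxQ i
        have h1 : ∑ t, C i t * x t ≤ ∑ k, y k j := by linarith
        have h2 : ∑ t, C i t * x t ≤ min (∑ k, y k j) M := le_min h1 this.le
        linarith [h2]
    · intro j h
      rw [hs, hs]
      exact min_le_min (hmono j h) le_rfl
    · intro x' y' z' h'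
      have step : ∑ j, ω j * (∑ i, (fun i j => z i j * min (∑ k, y k j) M) i j)
          ≤ ∑ j, ω j * ∑ i, y i j := by
        apply Finset.sum_le_sum
        intro j _
        rw [hs j]
        exact mul_le_mul_of_nonneg_left (min_le_left _ _) (hω j)
      exact le_trans step (hopt x' y' z' h')
    · intro i j
      dsimp only
      rcases hz01 i j with h | h <;> rw [h]
      · simp
      · simpa using min_le_right (∑ k, y k j) M
end

section
/- The map (x, z, θ) ↦ (x, z, s) with s_{ij} = 1 − Σ_{k≥j} z_{ik} is a bijection between Ω^z and Ω^s that preserves the objective value Σ_j ω_j θ_j; its inverse is given by z_{ij} = s_{i,j+1} − s_{ij} for j < p and z_{ip} = 1 − s_{ip}. -/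
open Finset

lemma sum_filter_ge_eq_Ico' (p : ℕ) (j : Fin p) (g : ℕ → ℝ) :
    ∑ k ∈ univ.filter (fun k : Fin p => j ≤ k), g (k : ℕ) =
      ∑ m ∈ Finset.Ico (j : ℕ) p, g m := by
  apply Finset.sum_nbij' (fun k : Fin p => (k : ℕ))
    (fun m => if h : m < p then (⟨m, h⟩ : Fin p) else j)
  · intro a ha
    simp only [mem_filter, mem_univ, true_and, Fin.le_def] at ha
    exact mem_Ico.2 ⟨ha, a.isLt⟩
  · intro a ha
    rw [mem_Ico] at ha
    rw [dif_pos ha.2]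
    simp only [mem_filter, mem_univ, true_and, Fin.le_def]
    exact ha.1
  · intro a _; simp [a.isLt]
  · intro a ha; rw [mem_Ico] at ha; rw [dif_pos ha.2]
  · intro a _; rfl

lemma sum_bwd_filter' (p : ℕ) (s : Fin p → Fin p → ℝ) (i j : Fin p) :
    ∑ k ∈ univ.filter (fun k : Fin p => j ≤ k),
      (if h : (k : ℕ) + 1 < p then s i ⟨(k:ℕ)+1, h⟩ - s i k else 1 - s i k)
      = 1 - s i j := by
  set t : ℕ → ℝ := fun m => if h : m < p then s i ⟨m, h⟩ else 1 with ht
  have key : ∀ k : Fin p,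
      (if h : (k : ℕ) + 1 < p then s i ⟨(k:ℕ)+1, h⟩ - s i k else 1 - s i k)
      = t ((k:ℕ)+1) - t (k:ℕ) := by
    intro k
    simp only [ht, dif_pos k.isLt]
    split_ifs with h <;> rfl
  calc ∑ k ∈ univ.filter (fun k : Fin p => j ≤ k),
        (if h : (k : ℕ) + 1 < p then s i ⟨(k:ℕ)+1, h⟩ - s i k else 1 - s i k)
      = ∑ k ∈ univ.filter (fun k : Fin p => j ≤ k), (t ((k:ℕ)+1) - t (k:ℕ)) :=
        Finset.sum_congr rfl (fun k _ => key k)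
    _ = ∑ m ∈ Finset.Ico (j : ℕ) p, (t (m+1) - t m) :=
        sum_filter_ge_eq_Ico' p j (fun m => t (m+1) - t m)
    _ = (t p - t 0) - (t (j:ℕ) - t 0) := by
        rw [Finset.sum_Ico_eq_sub _ (le_of_lt j.isLt), Finset.sum_range_sub,
          Finset.sum_range_sub]
    _ = 1 - s i j := by
        simp only [ht, dif_pos j.isLt, dif_neg (lt_irrefl p)]
        ring

lemma filter_ge_split' (p : ℕ) (j : Fin p) :
    (univ.filter (fun k : Fin p => j ≤ k)) =
      if h : (j : ℕ) + 1 < p then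
        insert j (univ.filter (fun k : Fin p => (⟨(j:ℕ)+1, h⟩ : Fin p) ≤ k))
      else {j} := by
  split_ifs with h
  · ext k
    simp only [mem_filter, mem_univ, true_and, mem_insert, Fin.le_def, Fin.ext_iff]
    omega
  · ext k
    have hk := k.isLt
    simp only [mem_filter, mem_univ, true_and, mem_singleton, Fin.le_def, Fin.ext_iff]
    omega

lemma sum01' {α : Type*} [DecidableEq α] (F : Finset α) (f : α → ℝ)
    (hf : ∀ a ∈ F, f a = 0 ∨ f a = 1) :
    ∑ a ∈ F, f a = ((F.filter (fun a => (f a = 1))).card : ℝ) := by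
  classical
  calc ∑ a ∈ F, f a = ∑ a ∈ F, (if f a = 1 then (1:ℝ) else 0) := by
        refine sum_congr rfl fun a ha => ?_
        rcases hf a ha with h | h <;> simp [h]
    _ = _ := by rw [Finset.sum_boole]

lemma partial_binary' {p : ℕ} (z : Fin p → ℝ) (hz : ∀ k, z k = 0 ∨ z k = 1)
    (hsum : ∑ k, z k = 1) (F : Finset (Fin p)) :
    ∑ k ∈ F, z k = 0 ∨ ∑ k ∈ F, z k = 1 := by
  classical
  have h1 := sum01' F z (fun a _ => hz a)
  have h2 := sum01' univ z (fun a _ => hz a)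
  rw [hsum] at h2
  have hc' : (univ.filter (fun a => z a = 1)).card = 1 := by exact_mod_cast h2.symm
  have hle : (F.filter (fun a => z a = 1)).card ≤ 1 := by
    rw [← hc']
    exact card_le_card (filter_subset_filter _ (subset_univ F))
  rcases Nat.le_one_iff_eq_zero_or_eq_one.1 hle with h | h
  · left; rw [h1, h]; norm_num
  · right; rw [h1, h]; norm_num

/-- The set Ω^z. -/
def SZ (p n : ℕ) (Q : Set (Fin n → ℝ)) (C : Fin p → Fin n → ℝ) (M : ℝ) :
    Set ((Fin n → ℝ) × (Fin p → Fin p → ℝ) × (Fin p → ℝ)) :=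
  {w | w.1 ∈ Q ∧ (∀ i j, w.2.1 i j = 0 ∨ w.2.1 i j = 1) ∧
    (∀ j, ∑ i, w.2.1 i j = 1) ∧ (∀ i, ∑ j, w.2.1 i j = 1) ∧
    (∀ i j, ∑ t, C i t * w.1 t ≤
      w.2.2 j + M * (1 - ∑ k ∈ Finset.univ.filter (fun k : Fin p => j ≤ k), w.2.1 i k)) ∧
    (∀ j : Fin p, ∀ h : (j : ℕ) + 1 < p, w.2.2 ⟨(j : ℕ) + 1, h⟩ ≤ w.2.2 j)}

/-- The set Ω^s. -/
def SS (p n : ℕ) (Q : Set (Fin n → ℝ)) (C : Fin p → Fin n → ℝ) (M : ℝ) :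
    Set ((Fin n → ℝ) × (Fin p → Fin p → ℝ) × (Fin p → ℝ)) :=
  {w | w.1 ∈ Q ∧ (∀ i j, w.2.1 i j = 0 ∨ w.2.1 i j = 1) ∧
    (∀ j : Fin p, ∑ i, w.2.1 i j = (j : ℕ)) ∧
    (∀ i : Fin p, ∀ j : Fin p, ∀ h : (j : ℕ) + 1 < p, w.2.1 i j ≤ w.2.1 i ⟨(j : ℕ) + 1, h⟩) ∧
    (∀ i j, ∑ t, C i t * w.1 t ≤ w.2.2 j + M * w.2.1 i j) ∧
    (∀ j : Fin p, ∀ h : (j : ℕ) + 1 < p, w.2.2 ⟨(j : ℕ) + 1, h⟩ ≤ w.2.2 j)}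

/-- s_{ij} = 1 − Σ_{k≥j} z_{ik}, at the level of triples (x, z, θ) ↦ (x, s, θ). -/
noncomputable def fwd (p n : ℕ) :
    (Fin n → ℝ) × (Fin p → Fin p → ℝ) × (Fin p → ℝ) →
    (Fin n → ℝ) × (Fin p → Fin p → ℝ) × (Fin p → ℝ) :=
  fun w => (w.1,
    fun i j => 1 - ∑ k ∈ Finset.univ.filter (fun k : Fin p => j ≤ k), w.2.1 i k,
    w.2.2)

/-- z_{ij} = s_{i,j+1} − s_{ij} for j < p and z_{ip} = 1 − s_{ip}, on triples. -/
noncomputable def bwd (p n : ℕ) :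
    (Fin n → ℝ) × (Fin p → Fin p → ℝ) × (Fin p → ℝ) →
    (Fin n → ℝ) × (Fin p → Fin p → ℝ) × (Fin p → ℝ) :=
  fun w => (w.1,
    fun i j => if h : (j : ℕ) + 1 < p then w.2.1 i ⟨(j : ℕ) + 1, h⟩ - w.2.1 i j
      else 1 - w.2.1 i j,
    w.2.2)

/-- The map (x,z,θ) ↦ (x,s,θ) is a bijection between Ω^z and Ω^s, with the stated inverse,
and it preserves the objective value Σ_j ω_j θ_j. -/
theorem stmt_12 (p n : ℕ) (Q : Set (Fin n → ℝ)) (C : Fin p → Fin n → ℝ)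
    (M : ℝ) (hM : 0 < M) (hMub : ∀ x ∈ Q, ∀ i, ∑ t, C i t * x t ≤ M)
    (ω : Fin p → ℝ) :
    (∀ w ∈ SZ p n Q C M, fwd p n w ∈ SS p n Q C M) ∧
    (∀ w ∈ SS p n Q C M, bwd p n w ∈ SZ p n Q C M) ∧
    (∀ w ∈ SZ p n Q C M, bwd p n (fwd p n w) = w) ∧
    (∀ w ∈ SS p n Q C M, fwd p n (bwd p n w) = w) ∧
    (∀ w, ∑ j, ω j * (fwd p n w).2.2 j = ∑ j, ω j * w.2.2 j) := by
  refine ⟨?_, ?_, ?_, ?_, fun w => rfl⟩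
  · -- fwd maps SZ into SS
    rintro ⟨x, z, θ⟩ ⟨hQ, hbin, hcol, hrow, hC, hθ⟩
    dsimp only at hQ hbin hcol hrow hC hθ
    refine ⟨hQ, ?_, ?_, ?_, ?_, hθ⟩
    · -- binary
      intro i j
      rcases partial_binary' (z i) (fun k => hbin i k) (hrow i)
        (univ.filter (fun k : Fin p => j ≤ k)) with h | h
      · right; show 1 - _ = 1; rw [h]; ring
      · left; show 1 - _ = 0; rw [h]; ring
    · -- column sums
      intro j
      show ∑ i, (1 - ∑ k ∈ univ.filter (fun k : Fin p => j ≤ k), z i k) = ((j:ℕ) : ℝ)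
      have hcard : (univ.filter (fun k : Fin p => j ≤ k)).card = p - (j:ℕ) := by
        have : univ.filter (fun k : Fin p => j ≤ k) = Finset.Ici j := by
          ext k; simp
        rw [this, Fin.card_Ici]
      rw [Finset.sum_sub_distrib, Finset.sum_const, Finset.sum_comm,
        Finset.sum_congr rfl (fun k _ => hcol k), Finset.sum_const, hcard]
      have hj := j.isLt
      simp only [card_univ, Fintype.card_fin, nsmul_eq_mul, mul_one]
      rw [Nat.cast_sub hj.le]
      ring
    · -- monotone
      intro i j h
      show 1 - ∑ k ∈ univ.filter (fun k : Fin p => j ≤ k), z i k ≤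
        1 - ∑ k ∈ univ.filter (fun k : Fin p => (⟨(j:ℕ)+1, h⟩ : Fin p) ≤ k), z i k
      rw [filter_ge_split' p j, dif_pos h,
        Finset.sum_insert (by simp [Fin.le_def])]
      have := hbin i j
      rcases this with h0 | h0 <;> rw [h0] <;> linarith [le_refl (0:ℝ)]
    · -- C constraint
      intro i j
      exact hC i j
  · -- bwd maps SS into SZ
    rintro ⟨x, s, θ⟩ ⟨hQ, hbin, hcol, hmono, hC, hθ⟩
    dsimp only at hQ hbin hcol hmono hC hθ
    have hbz : ∀ i j : Fin p,
        (if h : (j : ℕ) + 1 < p then s i ⟨(j:ℕ)+1, h⟩ - s i j else 1 - s i j) = 0 ∨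
        (if h : (j : ℕ) + 1 < p then s i ⟨(j:ℕ)+1, h⟩ - s i j else 1 - s i j) = 1 := by
      intro i j
      split_ifs with h
      · have hm := hmono i j h
        rcases hbin i j with h0 | h0 <;> rcases hbin i ⟨(j:ℕ)+1, h⟩ with h1 | h1
        · left; rw [h0, h1]; ring
        · right; rw [h0, h1]; ring
        · rw [h0, h1] at hm; linarith
        · left; rw [h0, h1]; ring
      · rcases hbin i j with h0 | h0
        · right; rw [h0]; ring
        · left; rw [h0]; ring
    refine ⟨hQ, hbz, ?_, ?_, ?_, hθ⟩
    · -- column sums equal 1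
      intro j
      show ∑ i, (if h : (j : ℕ) + 1 < p then s i ⟨(j:ℕ)+1, h⟩ - s i j else 1 - s i j) = 1
      by_cases h : (j:ℕ)+1 < p
      · rw [Finset.sum_congr rfl (fun i _ => dif_pos h), Finset.sum_sub_distrib,
          hcol, hcol]
        push_cast
        ring
      · rw [Finset.sum_congr rfl (fun i _ => dif_neg h), Finset.sum_sub_distrib,
          Finset.sum_const, hcol]
        have hj := j.isLt
        have hpj : (j:ℕ) + 1 = p := by omega
        have hc : ((j:ℕ):ℝ) + 1 = (p:ℝ) := by exact_mod_cast congrArg (Nat.cast : ℕ → ℝ) hpj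
        simp only [card_univ, Fintype.card_fin, nsmul_eq_mul, mul_one]
        linarith
    · -- row sums equal 1
      intro i
      show ∑ j : Fin p, (if h : (j : ℕ) + 1 < p then s i ⟨(j:ℕ)+1, h⟩ - s i j else 1 - s i j) = 1
      have hp : 0 < p := i.pos
      have h0 : s i ⟨0, hp⟩ = 0 := by
        have hs := hcol ⟨0, hp⟩
        have hnn : ∀ a ∈ univ, (0:ℝ) ≤ s a ⟨0, hp⟩ := by
          intro a _
          rcases hbin a ⟨0, hp⟩ with h | h <;> rw [h] <;> norm_num
        have := (Finset.sum_eq_zero_iff_of_nonneg hnn).1 (by rw [hs]; norm_num) i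
          (mem_univ _)
        exact this
      have huniv : univ.filter (fun k : Fin p => (⟨0, hp⟩ : Fin p) ≤ k) = univ := by
        apply Finset.filter_true_of_mem
        intro k _
        simp [Fin.le_def]
      have := sum_bwd_filter' p s i ⟨0, hp⟩
      rw [huniv] at this
      rw [this, h0]
      ring
    · -- C constraint
      intro i j
      show ∑ t, C i t * x t ≤ θ j + M * (1 - ∑ k ∈ univ.filter (fun k : Fin p => j ≤ k),
        (if h : (k : ℕ) + 1 < p then s i ⟨(k:ℕ)+1, h⟩ - s i k else 1 - s i k))
      rw [sum_bwd_filter' p s i j]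
      calc ∑ t, C i t * x t ≤ θ j + M * s i j := hC i j
        _ = θ j + M * (1 - (1 - s i j)) := by ring
  · -- bwd ∘ fwd = id
    rintro ⟨x, z, θ⟩ _
    simp only [fwd, bwd, Prod.mk.injEq]
    refine ⟨trivial, ?_, trivial⟩
    funext i j
    split_ifs with h
    · rw [filter_ge_split' p j, dif_pos h,
        Finset.sum_insert (by simp [Fin.le_def])]
      ring
    · rw [filter_ge_split' p j, dif_neg h, Finset.sum_singleton]
      ring
  · -- fwd ∘ bwd = id
    rintro ⟨x, s, θ⟩ _
    simp only [fwd, bwd, Prod.mk.injEq]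
    refine ⟨trivial, ?_, trivial⟩
    funext i j
    rw [sum_bwd_filter' p s i j]
    ring
end
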